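/- arXiv:2003.04167 — 3 statements merged into one kernel-verified Lean document; each statement's English description precedes it below -/
import Mathlib

section
/- If $u \in A_q$ and $w \in A_r \cap RH_\infty$ for some $q, r > 1$, then $uw \in A_s$ with $s = q + r - 1$ and $[uw]_{A_s} \leq [w]_{RH_\infty}[u]_{A_q}[w]_{A_r}$. -/
open MeasureTheory Set ENNReal NNReal

noncomputable section

abbrev Rn (n : ℕ) := EuclideanSpace ℝ (Fin n)

variable {n : ℕ}

/-- The closed cube with lower-left corner `x` and side length `r`. -/
def cubeSet (x : Rn n) (r : ℝ) : Set (Rn n) := {y : Rn n | ∀ i, x i ≤ y i ∧ y i ≤ x i + r}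

def IsCube (Q : Set (Rn n)) : Prop := ∃ (x : Rn n) (r : ℝ), 0 < r ∧ Q = cubeSet x r

/-- `w(E) = ∫_E w`. -/
def wInt (w : Rn n → ℝ≥0∞) (E : Set (Rn n)) : ℝ≥0∞ := ∫⁻ x in E, w x

/-- A weight: a measurable, positive, finite, locally integrable function. -/
def IsWeight (w : Rn n → ℝ≥0∞) : Prop :=
  Measurable w ∧ (∀ x, 0 < w x ∧ w x ≠ ∞) ∧ ∀ Q : Set (Rn n), IsCube Q → wInt w Q ≠ ∞

/-- Average of `w` over `Q`. -/
def avgw (w : Rn n → ℝ≥0∞) (Q : Set (Rn n)) : ℝ≥0∞ := wInt w Q / volume Q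

def A1Const (w : Rn n → ℝ≥0∞) : ℝ≥0∞ :=
  ⨆ (Q : Set (Rn n)) (_ : IsCube Q), avgw w Q * (essInf w (volume.restrict Q))⁻¹

def ApConst (p : ℝ) (w : Rn n → ℝ≥0∞) : ℝ≥0∞ :=
  ⨆ (Q : Set (Rn n)) (_ : IsCube Q),
    avgw w Q * (avgw (fun x => w x ^ (1 - p / (p - 1))) Q) ^ (p - 1)

def MemAp (p : ℝ) (w : Rn n → ℝ≥0∞) : Prop :=
  if p = 1 then A1Const w ≠ ∞ else ApConst p w ≠ ∞

def MemAinf (w : Rn n → ℝ≥0∞) : Prop := ∃ p : ℝ, 1 ≤ p ∧ MemAp p w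

def RHinfConst (w : Rn n → ℝ≥0∞) : ℝ≥0∞ :=
  ⨆ (Q : Set (Rn n)) (_ : IsCube Q), (volume Q / wInt w Q) * essSup w (volume.restrict Q)

/-- Weak `L^p` quasinorm with respect to a measure `μ`. -/
def wkNorm {α : Type*} [MeasurableSpace α] (f : α → ℝ≥0∞) (p : ℝ) (μ : Measure α) : ℝ≥0∞ :=
  ⨆ y : ℝ≥0, (y : ℝ≥0∞) * (μ {x | (y : ℝ≥0∞) < f x}) ^ (1 / p)

/-- The measure `w(x) dx`. -/
def wMeasure (w : Rn n → ℝ≥0∞) : Measure (Rn n) := volume.withDensity w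

/-- Weak `L^{p,∞}(w)` quasinorm. -/
def wkNormW (f : Rn n → ℝ≥0∞) (p : ℝ) (w : Rn n → ℝ≥0∞) : ℝ≥0∞ := wkNorm f p (wMeasure w)

/-- Lorentz `L^{p,1}(w)` norm: `p ∫_0^∞ w({|f| > y})^{1/p} dy`. -/
def lorNorm (f : Rn n → ℝ≥0∞) (p : ℝ) (w : Rn n → ℝ≥0∞) : ℝ≥0∞ :=
  ENNReal.ofReal p * ∫⁻ y in Ioi (0 : ℝ), (wMeasure w {x | ENNReal.ofReal y < f x}) ^ (1 / p)

/-- The Hardy–Littlewood maximal operator over cubes. -/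
def HLM (f : Rn n → ℝ≥0∞) (x : Rn n) : ℝ≥0∞ :=
  ⨆ (Q : Set (Rn n)) (_ : IsCube Q) (_ : x ∈ Q), (∫⁻ y in Q, f y) / volume Q

/-- `‖w‖_{A_p^R}`. -/
def AprNorm (p : ℝ) (w : Rn n → ℝ≥0∞) : ℝ≥0∞ :=
  ⨆ (Q : Set (Rn n)) (_ : IsCube Q) (E : Set (Rn n)) (_ : MeasurableSet E) (_ : E ⊆ Q)
    (_ : 0 < wInt w E), (volume E / volume Q) * (wInt w Q / wInt w E) ^ (1 / p)

def MemApr (p : ℝ) (w : Rn n → ℝ≥0∞) : Prop := AprNorm p w ≠ ∞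

/-- `L^{p',∞}(w)` norm, interpreted as `L^∞(w)` when `p = 1`. -/
def dualWkNorm (p : ℝ) (g : Rn n → ℝ≥0∞) (w : Rn n → ℝ≥0∞) : ℝ≥0∞ :=
  if p = 1 then essSup g (wMeasure w) else wkNormW g (p / (p - 1)) w

/-- `[w]_{A_p^R}`. -/
def AprConst (p : ℝ) (w : Rn n → ℝ≥0∞) : ℝ≥0∞ :=
  ⨆ (Q : Set (Rn n)) (_ : IsCube Q),
    wInt w Q ^ (1 / p) * dualWkNorm p (Q.indicator fun x => (w x)⁻¹) w / volume Q

/-- The multi(sub)linear maximal operator `𝓜`. -/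
def curlyM {m : ℕ} (f : Fin m → Rn n → ℝ≥0∞) (x : Rn n) : ℝ≥0∞ :=
  ⨆ (Q : Set (Rn n)) (_ : IsCube Q) (_ : x ∈ Q), ∏ i, (∫⁻ y in Q, f i y) / volume Q

/-! On a cube `Q`, the `RH_∞` condition bounds `esssup_Q w` by `[w]_{RH_∞} ⨍_Q w`, hence
`⨍_Q uw ≤ [w]_{RH_∞} ⨍_Q u ⨍_Q w`. Since `s - 1 = (q - 1) + (r - 1)`, Hölder's inequality with
exponents `(s - 1)/(q - 1)` and `(s - 1)/(r - 1)` gives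
`(⨍_Q (uw)^{1-s'})^{s-1} ≤ (⨍_Q u^{1-q'})^{q-1} (⨍_Q w^{1-r'})^{r-1}`.
The product of the two estimates is the `A_s` bound on `Q`. -/

section Lintegral

variable {α : Type*} [MeasurableSpace α] (μ : Measure α) {f g : α → ℝ≥0∞}

theorem lintegral_mul_le_essSup_mul_lintegral (hf : AEMeasurable f μ) :
    ∫⁻ x, f x * g x ∂μ ≤ essSup g μ * ∫⁻ x, f x ∂μ := by
  rw [← lintegral_const_mul'' _ hf]
  refine lintegral_mono_ae ?_
  filter_upwards [ENNReal.ae_le_essSup g] with x hx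
  rw [mul_comm]
  gcongr

theorem lintegral_mul_rpow_add_le (hf : AEMeasurable f μ) (hg : AEMeasurable g μ) {a b : ℝ}
    (ha : 0 < a) (hb : 0 < b) :
    (∫⁻ x, f x * g x ∂μ) ^ (a + b) ≤
      (∫⁻ x, f x ^ ((a + b) / a) ∂μ) ^ a * (∫⁻ x, g x ^ ((a + b) / b) ∂μ) ^ b := by
  have hab : 0 < a + b := by positivity
  have hpq : ((a + b) / a).HolderConjugate ((a + b) / b) := by
    rw [Real.holderConjugate_iff]
    refine ⟨by rw [lt_div_iff₀ ha]; linarith, by field_simp⟩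
  calc (∫⁻ x, f x * g x ∂μ) ^ (a + b)
      ≤ ((∫⁻ x, f x ^ ((a + b) / a) ∂μ) ^ (1 / ((a + b) / a)) *
          (∫⁻ x, g x ^ ((a + b) / b) ∂μ) ^ (1 / ((a + b) / b))) ^ (a + b) := by
        gcongr
        exact ENNReal.lintegral_mul_le_Lp_mul_Lq μ hpq hf hg
    _ = _ := by
        rw [ENNReal.mul_rpow_of_nonneg _ _ hab.le, ← ENNReal.rpow_mul, ← ENNReal.rpow_mul]
        congr 2 <;> field_simp

theorem lintegral_mul_rpow_neg_inv_le (hf : Measurable f) (hg : Measurable g)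
    (hf0 : ∀ x, f x ≠ 0) (hg0 : ∀ x, g x ≠ 0) {a b : ℝ} (ha : 0 < a) (hb : 0 < b) :
    (∫⁻ x, (f x * g x) ^ (-(a + b)⁻¹) ∂μ) ^ (a + b) ≤
      (∫⁻ x, f x ^ (-a⁻¹) ∂μ) ^ a * (∫⁻ x, g x ^ (-b⁻¹) ∂μ) ^ b := by
  have hexp : ∀ c, 0 < c → -(a + b)⁻¹ * ((a + b) / c) = -c⁻¹ := fun c hc => by
    field_simp
  have key := lintegral_mul_rpow_add_le μ (hf.pow_const (-(a + b)⁻¹)).aemeasurable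
    (hg.pow_const (-(a + b)⁻¹)).aemeasurable ha hb
  simp_rw [← ENNReal.rpow_mul, hexp a ha, hexp b hb] at key
  simpa only [ENNReal.mul_rpow_of_ne_zero (hf0 _) (hg0 _)] using key

end Lintegral

theorem volume_cubeSet (x : Rn n) (r : ℝ) : volume (cubeSet x r) = ENNReal.ofReal r ^ n := by
  have hpi : cubeSet x r =
      (MeasurableEquiv.toLp 2 (Fin n → ℝ)).symm ⁻¹' Set.pi univ fun i => Icc (x i) (x i + r) := by
    ext y
    simp [cubeSet, Pi.le_def, forall_and]
  rw [hpi, (EuclideanSpace.volume_preserving_symm_measurableEquiv_toLp (Fin n)).measure_preimage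
    (MeasurableSet.univ_pi fun _ => measurableSet_Icc).nullMeasurableSet, volume_pi_pi]
  simp

theorem IsCube.volume_ne_zero {Q : Set (Rn n)} (hQ : IsCube Q) : volume Q ≠ 0 := by
  obtain ⟨x, r, hr, rfl⟩ := hQ
  simp [volume_cubeSet, hr.not_ge]

theorem IsCube.volume_ne_top {Q : Set (Rn n)} (hQ : IsCube Q) : volume Q ≠ ∞ := by
  obtain ⟨x, r, -, rfl⟩ := hQ
  simp [volume_cubeSet]

theorem IsWeight.wInt_ne_zero {w : Rn n → ℝ≥0∞} (hw : IsWeight w) {Q : Set (Rn n)}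
    (hQ : IsCube Q) : wInt w Q ≠ 0 := by
  have hsupp : Function.support w = univ :=
    Function.support_eq_univ fun x => (hw.2.1 x).1.ne'
  rw [wInt, ← pos_iff_ne_zero, lintegral_pos_iff_support hw.1, hsupp,
    Measure.restrict_apply_univ]
  exact hQ.volume_ne_zero.bot_lt

theorem avgw_eq_lintegral (w : Rn n → ℝ≥0∞) (Q : Set (Rn n)) :
    avgw w Q = ∫⁻ x, w x ∂((volume Q)⁻¹ • volume.restrict Q) := by
  rw [avgw, wInt, lintegral_smul_measure, div_eq_mul_inv, mul_comm, smul_eq_mul]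

theorem essSup_le_RHinfConst_mul_avgw {w : Rn n → ℝ≥0∞} (hw : IsWeight w) {Q : Set (Rn n)}
    (hQ : IsCube Q) : essSup w (volume.restrict Q) ≤ RHinfConst w * avgw w Q := by
  have hRH : volume Q / wInt w Q * essSup w (volume.restrict Q) ≤ RHinfConst w :=
    le_iSup₂ (f := fun Q (_ : IsCube Q) => volume Q / wInt w Q * essSup w (volume.restrict Q))
      Q hQ
  have hcancel : volume Q / wInt w Q * avgw w Q = 1 := by
    rw [avgw, ← ENNReal.inv_div (Or.inl hQ.volume_ne_top) (Or.inl hQ.volume_ne_zero)]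
    exact ENNReal.inv_mul_cancel (ENNReal.div_pos (hw.wInt_ne_zero hQ) hQ.volume_ne_top).ne'
      (ENNReal.div_lt_top (hw.2.2 Q hQ) hQ.volume_ne_zero).ne
  calc essSup w (volume.restrict Q)
      = volume Q / wInt w Q * essSup w (volume.restrict Q) * avgw w Q := by
        rw [mul_comm _ (essSup _ _), mul_assoc, hcancel, mul_one]
    _ ≤ RHinfConst w * avgw w Q := by gcongr

theorem avgw_mul_le {u w : Rn n → ℝ≥0∞} (hu : Measurable u) (hw : IsWeight w) {Q : Set (Rn n)}
    (hQ : IsCube Q) : avgw (fun x => u x * w x) Q ≤ RHinfConst w * avgw w Q * avgw u Q := by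
  have hV : (volume Q)⁻¹ ≠ 0 := ENNReal.inv_ne_zero.mpr hQ.volume_ne_top
  calc avgw (fun x => u x * w x) Q
      ≤ essSup w ((volume Q)⁻¹ • volume.restrict Q) * avgw u Q := by
        simpa only [avgw_eq_lintegral] using
          lintegral_mul_le_essSup_mul_lintegral _ hu.aemeasurable
    _ = essSup w (volume.restrict Q) * avgw u Q := by rw [essSup_ennreal_smul_measure hV]
    _ ≤ RHinfConst w * avgw w Q * avgw u Q := by
        gcongr
        exact essSup_le_RHinfConst_mul_avgw hw hQ

theorem avgw_mul_rpow_neg_inv_le {u w : Rn n → ℝ≥0∞} (hu : IsWeight u) (hw : IsWeight w)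
    {a b : ℝ} (ha : 0 < a) (hb : 0 < b) (Q : Set (Rn n)) :
    avgw (fun x => (u x * w x) ^ (-(a + b)⁻¹)) Q ^ (a + b) ≤
      avgw (fun x => u x ^ (-a⁻¹)) Q ^ a * avgw (fun x => w x ^ (-b⁻¹)) Q ^ b := by
  simp only [avgw_eq_lintegral]
  exact lintegral_mul_rpow_neg_inv_le _ hu.1 hw.1 (fun x => (hu.2.1 x).1.ne')
    (fun x => (hw.2.1 x).1.ne') ha hb

theorem avgw_mul_mul_avgw_rpow_le {u w : Rn n → ℝ≥0∞} (hu : IsWeight u) (hw : IsWeight w)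
    {a b : ℝ} (ha : 0 < a) (hb : 0 < b) {Q : Set (Rn n)} (hQ : IsCube Q) :
    avgw (fun x => u x * w x) Q * avgw (fun x => (u x * w x) ^ (-(a + b)⁻¹)) Q ^ (a + b) ≤
      RHinfConst w * (avgw u Q * avgw (fun x => u x ^ (-a⁻¹)) Q ^ a) *
        (avgw w Q * avgw (fun x => w x ^ (-b⁻¹)) Q ^ b) :=
  calc _ ≤ RHinfConst w * avgw w Q * avgw u Q *
        (avgw (fun x => u x ^ (-a⁻¹)) Q ^ a * avgw (fun x => w x ^ (-b⁻¹)) Q ^ b) :=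
        mul_le_mul' (avgw_mul_le hu.1 hw hQ) (avgw_mul_rpow_neg_inv_le hu hw ha hb Q)
    _ = _ := by ring

theorem one_sub_div_sub_one {p : ℝ} (hp : p ≠ 1) : 1 - p / (p - 1) = -(p - 1)⁻¹ := by
  field_simp [sub_ne_zero.mpr hp]
  ring

theorem avgw_mul_avgw_rpow_le_ApConst {p : ℝ} (hp : p ≠ 1) (w : Rn n → ℝ≥0∞) {Q : Set (Rn n)}
    (hQ : IsCube Q) :
    avgw w Q * avgw (fun x => w x ^ (-(p - 1)⁻¹)) Q ^ (p - 1) ≤ ApConst p w := by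
  rw [← one_sub_div_sub_one hp]
  exact le_iSup₂ (f := fun Q (_ : IsCube Q) =>
    avgw w Q * avgw (fun x => w x ^ (1 - p / (p - 1))) Q ^ (p - 1)) Q hQ

/-- If `u ∈ A_q` and `w ∈ A_r ∩ RH_∞` (`q, r > 1`), then `uw ∈ A_{q+r-1}` with
`[uw]_{A_{q+r-1}} ≤ [w]_{RH_∞}[u]_{A_q}[w]_{A_r}`. -/
theorem stmt3 {n : ℕ} (u w : Rn n → ℝ≥0∞) (hu : IsWeight u) (hw : IsWeight w)
    (q r : ℝ) (hq : 1 < q) (hr : 1 < r)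
    (hAq : ApConst q u ≠ ∞) (hAr : ApConst r w ≠ ∞) (hRH : RHinfConst w ≠ ∞) :
    MemAp (q + r - 1) (fun x => u x * w x) ∧
      ApConst (q + r - 1) (fun x => u x * w x) ≤
        RHinfConst w * ApConst q u * ApConst r w := by
  have hs : q + r - 1 ≠ 1 := by linarith
  have hbound : ApConst (q + r - 1) (fun x => u x * w x) ≤
      RHinfConst w * ApConst q u * ApConst r w := by
    refine iSup₂_le fun Q hQ => ?_
    rw [one_sub_div_sub_one hs, show q + r - 1 - 1 = (q - 1) + (r - 1) by ring]
    calc _ ≤ _ := avgw_mul_mul_avgw_rpow_le hu hw (sub_pos.mpr hq) (sub_pos.mpr hr) hQ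
      _ ≤ _ := by
        gcongr
        · exact avgw_mul_avgw_rpow_le_ApConst hq.ne' u hQ
        · exact avgw_mul_avgw_rpow_le_ApConst hr.ne' w hQ
  refine ⟨?_, hbound⟩
  rw [MemAp, if_neg hs]
  exact ne_top_of_le_ne_top (ENNReal.mul_ne_top (ENNReal.mul_ne_top hRH hAq) hAr) hbound
end
end

section
/- Let $p \geq 1$ and let $w$ be a weight on $\mathbb{R}^n$. Then $[w]_{A_p^{\mathcal{R}}} \leq \|w\|_{A_p^{\mathcal{R}}} \leq p\,[w]_{A_p^{\mathcal{R}}}$. -/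
open MeasureTheory Set ENNReal NNReal

noncomputable section

variable {n : ℕ}

/-!
Fix a cube `Q` and put `g = 1_Q w⁻¹`. On a level set `E_y = {g > y} ⊆ Q` we have `w < 1 / y`,
so `y w(E_y) ≤ |E_y|`; testing `‖w‖` on `E = E_y` bounds every term
`w(Q)^{1/p} y w(E_y)^{1/p'} / |Q|` of `[w]`, whence `[w] ≤ ‖w‖`.
Conversely, for measurable `E ⊆ Q` we have `|E| = ∫_E g dw`, and Kolmogorov's inequality
`∫_E g dw ≤ (p' / (p' - 1)) ‖g‖_{L^{p',∞}(w)} w(E)^{1 - 1/p'} = p ‖g‖_{L^{p',∞}(w)} w(E)^{1/p}`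
(for `p = 1` simply `∫_E g dw ≤ ‖g‖_{L^∞(w)} w(E)`) gives `‖w‖ ≤ p [w]`.
-/

theorem lintegral_Ioi_le_of_le_min {φ : ℝ → ℝ≥0∞} {q A M : ℝ} (hq : 1 < q) (hA : 0 ≤ A)
    (hM : 0 ≤ M) (hφM : ∀ t ∈ Ioi (0 : ℝ), φ t ≤ ENNReal.ofReal M)
    (hφA : ∀ t ∈ Ioi (0 : ℝ), φ t ≤ ENNReal.ofReal (A ^ q * t ^ (-q))) :
    ∫⁻ t in Ioi 0, φ t ≤ ENNReal.ofReal (q / (q - 1) * A * M ^ (1 - 1 / q)) := by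
  have hq0 : 0 < q := zero_lt_one.trans hq
  have hq1 : 0 < q - 1 := by linarith
  rcases hA.eq_or_lt with rfl | hA
  · calc ∫⁻ t in Ioi 0, φ t ≤ ∫⁻ _ in Ioi (0 : ℝ), 0 := setLIntegral_mono' measurableSet_Ioi
          fun t ht => (hφA t ht).trans_eq (by simp [Real.zero_rpow hq0.ne'])
      _ ≤ _ := by simp
  rcases hM.eq_or_lt with rfl | hM
  · calc ∫⁻ t in Ioi 0, φ t ≤ ∫⁻ _ in Ioi (0 : ℝ), 0 := setLIntegral_mono' measurableSet_Ioi
          fun t ht => (hφM t ht).trans_eq ENNReal.ofReal_zero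
      _ ≤ _ := by simp
  -- `t₀` is where the two bounds `M` and `A ^ q * t ^ (-q)` cross.
  set t₀ := A * M ^ (-(1 / q)) with ht₀
  have ht₀_pos : 0 < t₀ := by positivity
  have hhead : ∫⁻ t in Ioc 0 t₀, φ t ≤ ENNReal.ofReal (A * M ^ (1 - 1 / q)) := by
    calc ∫⁻ t in Ioc 0 t₀, φ t ≤ ∫⁻ _ in Ioc 0 t₀, ENNReal.ofReal M :=
          setLIntegral_mono' measurableSet_Ioc fun t ht => hφM t ht.1
      _ = ENNReal.ofReal (M * t₀) := by
          rw [setLIntegral_const, Real.volume_Ioc, sub_zero, ENNReal.ofReal_mul hM.le]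
      _ = ENNReal.ofReal (A * M ^ (1 - 1 / q)) := by
          rw [ht₀, mul_left_comm, ← Real.rpow_one_add' hM.le, ← sub_eq_add_neg]
          have : 1 / q < 1 := (div_lt_one hq0).mpr hq
          linarith
  have htail : ∫⁻ t in Ioi t₀, φ t ≤ ENNReal.ofReal (A * M ^ (1 - 1 / q) / (q - 1)) := by
    have hlt : -q < -1 := by linarith
    calc ∫⁻ t in Ioi t₀, φ t ≤ ∫⁻ t in Ioi t₀, ENNReal.ofReal (A ^ q * t ^ (-q)) :=
          setLIntegral_mono' measurableSet_Ioi fun t ht => hφA t (ht₀_pos.trans ht)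
      _ = ENNReal.ofReal (∫ t in Ioi t₀, A ^ q * t ^ (-q)) := by
          refine (ofReal_integral_eq_lintegral_ofReal
            ((integrableOn_Ioi_rpow_of_lt hlt ht₀_pos).const_mul _) ?_).symm
          filter_upwards [ae_restrict_mem measurableSet_Ioi] with t ht
          exact mul_nonneg (by positivity) (Real.rpow_nonneg (ht₀_pos.trans ht).le _)
      _ = ENNReal.ofReal (A * M ^ (1 - 1 / q) / (q - 1)) := by
          rw [integral_const_mul, integral_Ioi_rpow_of_lt hlt ht₀_pos]
          have hpow : t₀ ^ (-q + 1) = A ^ (-q + 1) * M ^ (1 - 1 / q) := by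
            rw [ht₀, Real.mul_rpow hA.le (by positivity), ← Real.rpow_mul hM.le]
            congr 2
            field_simp
            ring
          have hA1 : A ^ q * A ^ (-q + 1) = A := by
            rw [← Real.rpow_add hA]
            simp
          have : -q + 1 ≠ 0 := by linarith
          rw [hpow]
          congr 1
          generalize M ^ (1 - 1 / q) = m at *
          generalize A ^ (-q + 1) = b at *
          generalize A ^ q = a at *
          field_simp
          linear_combination m * (1 - q) * hA1
  calc ∫⁻ t in Ioi 0, φ t = ∫⁻ t in Ioc 0 t₀ ∪ Ioi t₀, φ t := by
        rw [Ioc_union_Ioi_eq_Ioi ht₀_pos.le]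
    _ ≤ (∫⁻ t in Ioc 0 t₀, φ t) + ∫⁻ t in Ioi t₀, φ t := lintegral_union_le _ _ _
    _ ≤ ENNReal.ofReal (A * M ^ (1 - 1 / q)) + ENNReal.ofReal (A * M ^ (1 - 1 / q) / (q - 1)) :=
        add_le_add hhead htail
    _ = ENNReal.ofReal (q / (q - 1) * A * M ^ (1 - 1 / q)) := by
        rw [← ENNReal.ofReal_add (by positivity) (by positivity), mul_assoc]
        congr 1
        generalize A * M ^ (1 - 1 / q) = K
        field_simp
        ring

section

variable {α : Type*} [MeasurableSpace α] {μ : Measure α} {f : α → ℝ≥0∞} {q : ℝ}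

theorem meas_lt_le_wkNorm_div_rpow (hq : 0 < q) {y : ℝ≥0} (hy : y ≠ 0) :
    μ {x | (y : ℝ≥0∞) < f x} ≤ (wkNorm f q μ / y) ^ q := by
  have hle : (y : ℝ≥0∞) * μ {x | (y : ℝ≥0∞) < f x} ^ (1 / q) ≤ wkNorm f q μ :=
    le_iSup (fun y : ℝ≥0 => (y : ℝ≥0∞) * μ {x | (y : ℝ≥0∞) < f x} ^ (1 / q)) y
  rw [← ENNReal.rpow_inv_le_iff hq, ← one_div]
  rw [ENNReal.le_div_iff_mul_le (.inl (by exact_mod_cast hy)) (.inl ENNReal.coe_ne_top), mul_comm]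
  exact hle

theorem setLIntegral_le_wkNorm_mul_rpow (hf : AEMeasurable f μ) (hf_fin : ∀ᵐ x ∂μ, f x ≠ ∞)
    (hq : 1 < q) {E : Set α} (hE : μ E ≠ ∞) :
    ∫⁻ x in E, f x ∂μ ≤ ENNReal.ofReal (q / (q - 1)) * wkNorm f q μ * μ E ^ (1 - 1 / q) := by
  have hq0 : 0 < q := zero_lt_one.trans hq
  have hexp : 0 < 1 - 1 / q := by
    have : 1 / q < 1 := (div_lt_one hq0).mpr hq
    linarith
  set A := wkNorm f q μ
  rcases eq_or_ne A ∞ with hA | hA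
  · rcases eq_or_ne (μ E) 0 with h0 | h0
    · simp [Measure.restrict_eq_zero.mpr h0]
    · have hq' : 0 < q / (q - 1) := div_pos hq0 (by linarith)
      rw [hA, ENNReal.mul_top (ENNReal.ofReal_pos.mpr hq').ne', ENNReal.top_mul (by simp [h0, hE])]
      exact le_top
  have hφA : ∀ t ∈ Ioi (0 : ℝ), μ.restrict E {x | t < (f x).toReal}
      ≤ ENNReal.ofReal (A.toReal ^ q * t ^ (-q)) := by
    intro t (ht : 0 < t)
    calc μ.restrict E {x | t < (f x).toReal} ≤ μ {x | ENNReal.ofReal t < f x} := by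
          refine (Measure.restrict_le_self _).trans (measure_mono fun x hx => ?_)
          exact (ENNReal.ofReal_lt_iff_lt_toReal ht.le
            (fun h => by simp [h] at hx; linarith)).mpr hx
      _ ≤ (A / ENNReal.ofReal t) ^ q :=
          meas_lt_le_wkNorm_div_rpow hq0 (by simpa using ht)
      _ = ENNReal.ofReal (A.toReal ^ q * t ^ (-q)) := by
          rw [← ENNReal.ofReal_toReal hA, ← ENNReal.ofReal_div_of_pos ht,
            ENNReal.ofReal_rpow_of_nonneg (by positivity) hq0.le, Real.div_rpow (by positivity)
            ht.le, Real.rpow_neg ht.le, div_eq_mul_inv, ENNReal.toReal_ofReal ENNReal.toReal_nonneg]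
  calc ∫⁻ x in E, f x ∂μ = ∫⁻ x in E, ENNReal.ofReal (f x).toReal ∂μ := by
        refine lintegral_congr_ae ?_
        filter_upwards [ae_restrict_of_ae hf_fin] with x hx
        exact (ENNReal.ofReal_toReal hx).symm
    _ = ∫⁻ t in Ioi 0, μ.restrict E {x | t < (f x).toReal} :=
        lintegral_eq_lintegral_meas_lt _ (ae_of_all _ fun _ => ENNReal.toReal_nonneg)
          hf.restrict.ennreal_toReal
    _ ≤ ENNReal.ofReal (q / (q - 1) * A.toReal * (μ E).toReal ^ (1 - 1 / q)) :=
        lintegral_Ioi_le_of_le_min hq ENNReal.toReal_nonneg ENNReal.toReal_nonneg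
          (fun t _ => by
            rw [ENNReal.ofReal_toReal hE]
            exact (measure_mono (subset_univ _)).trans_eq (Measure.restrict_apply_univ E))
          hφA
    _ = ENNReal.ofReal (q / (q - 1)) * A * μ E ^ (1 - 1 / q) := by
        rw [ENNReal.ofReal_mul (by positivity), ENNReal.ofReal_mul (by positivity),
          ENNReal.ofReal_toReal hA, ← ENNReal.ofReal_rpow_of_nonneg ENNReal.toReal_nonneg hexp.le,
          ENNReal.ofReal_toReal hE]

theorem essSup_le_iSup_meas_lt_ne_zero :
    essSup f μ ≤ ⨆ (y : ℝ≥0) (_ : μ {x | (y : ℝ≥0∞) < f x} ≠ 0), (y : ℝ≥0∞) := by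
  refine ENNReal.le_of_forall_nnreal_lt fun r hr => le_iSup₂_of_le r (fun h0 => ?_) le_rfl
  refine hr.not_ge (essSup_le_of_ae_le _ ?_)
  rw [Filter.EventuallyLE, ae_iff]
  simpa using h0

theorem mul_setLIntegral_le_measure {E : Set α} {c : ℝ≥0∞} (hc : c ≠ ∞) (h : ∀ x ∈ E, c * f x ≤ 1) :
    c * ∫⁻ x in E, f x ∂μ ≤ μ E := by
  rw [← lintegral_const_mul' _ _ hc]
  exact (setLIntegral_mono measurable_const h).trans_eq (setLIntegral_one E)

end

section Weight

variable {p : ℝ} {w : Rn n → ℝ≥0∞} {Q E : Set (Rn n)}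

theorem isClosed_cubeSet (x : Rn n) (r : ℝ) : IsClosed (cubeSet x r) := by
  simp only [cubeSet, ofPred_forall, ofPred_and]
  exact isClosed_iInter fun i =>
    (isClosed_le continuous_const (by fun_prop)).inter (isClosed_le (by fun_prop) continuous_const)

theorem IsCube.measurableSet (hQ : IsCube Q) : MeasurableSet Q := by
  obtain ⟨x, r, -, rfl⟩ := hQ
  exact (isClosed_cubeSet x r).measurableSet

theorem wMeasure_apply (w : Rn n → ℝ≥0∞) (E : Set (Rn n)) : wMeasure w E = wInt w E :=
  withDensity_apply' w E

theorem le_aprNorm (hQ : IsCube Q) (hE : MeasurableSet E) (hEQ : E ⊆ Q) (hwE : 0 < wInt w E) :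
    volume E / volume Q * (wInt w Q / wInt w E) ^ (1 / p) ≤ AprNorm p w :=
  le_iSup_of_le Q <| le_iSup_of_le hQ <| le_iSup_of_le E <| le_iSup_of_le hE <|
    le_iSup_of_le hEQ <| le_iSup_of_le hwE le_rfl

theorem le_aprConst (hQ : IsCube Q) :
    wInt w Q ^ (1 / p) * dualWkNorm p (Q.indicator fun x => (w x)⁻¹) w / volume Q
      ≤ AprConst p w :=
  le_iSup₂_of_le Q hQ le_rfl

theorem wInt_ne_top_of_subset (hw : IsWeight w) (hQ : IsCube Q) (hEQ : E ⊆ Q) :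
    wInt w E ≠ ∞ :=
  ne_top_of_le_ne_top (hw.2.2 Q hQ) (lintegral_mono_set hEQ)

theorem mul_wInt_rpow_div_le_aprNorm (hp : 0 ≤ p) (hw : IsWeight w) (hQ : IsCube Q) (y : ℝ≥0)
    (hE : wInt w {x | (y : ℝ≥0∞) < Q.indicator (fun x => (w x)⁻¹) x} ≠ 0) :
    wInt w Q ^ (1 / p)
        * ((y : ℝ≥0∞) * wInt w {x | (y : ℝ≥0∞) < Q.indicator (fun x => (w x)⁻¹) x} ^ (1 - 1 / p))
        / volume Q ≤ AprNorm p w := by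
  set E := {x | (y : ℝ≥0∞) < Q.indicator (fun x => (w x)⁻¹) x}
  have hEQ : E ⊆ Q := fun x hx => by
    by_contra hxQ
    simp [E, indicator_of_notMem hxQ] at hx
  have hEm : MeasurableSet E :=
    measurableSet_lt measurable_const (hw.1.inv.indicator hQ.measurableSet)
  have hwE_fin := wInt_ne_top_of_subset hw hQ hEQ
  have hyE : (y : ℝ≥0∞) * wInt w E ≤ volume E := by
    refine mul_setLIntegral_le_measure ENNReal.coe_ne_top fun x hx => ?_
    have hx' : (y : ℝ≥0∞) < Q.indicator (fun x => (w x)⁻¹) x := hx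
    rw [indicator_of_mem (hEQ hx)] at hx'
    exact ENNReal.le_inv_iff_mul_le.mp hx'.le
  calc wInt w Q ^ (1 / p) * ((y : ℝ≥0∞) * wInt w E ^ (1 - 1 / p)) / volume Q
      = (y : ℝ≥0∞) * wInt w E * (wInt w Q ^ (1 / p) / wInt w E ^ (1 / p)) / volume Q := by
        rw [ENNReal.rpow_sub _ _ hE hwE_fin, ENNReal.rpow_one]
        simp only [div_eq_mul_inv]
        ring
    _ ≤ volume E * (wInt w Q / wInt w E) ^ (1 / p) / volume Q := by
        rw [ENNReal.div_rpow_of_nonneg _ _ (by positivity)]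
        gcongr
    _ = volume E / volume Q * (wInt w Q / wInt w E) ^ (1 / p) := by
        simp only [div_eq_mul_inv]
        ring
    _ ≤ AprNorm p w := le_aprNorm hQ hEm hEQ (pos_iff_ne_zero.mpr hE)

theorem dualWkNorm_le_iSup (hp : 1 ≤ p) (g : Rn n → ℝ≥0∞) (w : Rn n → ℝ≥0∞) :
    dualWkNorm p g w ≤ ⨆ (y : ℝ≥0) (_ : wMeasure w {x | (y : ℝ≥0∞) < g x} ≠ 0),
      (y : ℝ≥0∞) * wMeasure w {x | (y : ℝ≥0∞) < g x} ^ (1 - 1 / p) := by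
  unfold dualWkNorm
  split_ifs with hp1
  · subst hp1
    simpa using essSup_le_iSup_meas_lt_ne_zero (μ := wMeasure w) (f := g)
  have hp1 : 1 < p := hp.lt_of_ne' hp1
  have hexp : 1 / (p / (p - 1)) = 1 - 1 / p := by
    have : p - 1 ≠ 0 := by linarith
    field_simp
  have hexp_pos : 0 < 1 - 1 / p := by
    have : 1 / p < 1 := (div_lt_one (by linarith)).mpr hp1
    linarith
  unfold wkNormW wkNorm
  rw [hexp]
  refine iSup_le fun y => ?_
  rcases eq_or_ne (wMeasure w {x | (y : ℝ≥0∞) < g x}) 0 with h0 | h0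
  · rw [h0, ENNReal.zero_rpow_of_pos hexp_pos, mul_zero]
    exact zero_le
  · exact le_iSup₂_of_le y h0 le_rfl

theorem aprConst_le_aprNorm (hp : 1 ≤ p) (hw : IsWeight w) : AprConst p w ≤ AprNorm p w := by
  refine iSup₂_le fun Q hQ => ?_
  calc wInt w Q ^ (1 / p) * dualWkNorm p (Q.indicator fun x => (w x)⁻¹) w / volume Q
      ≤ wInt w Q ^ (1 / p) * (⨆ (y : ℝ≥0)
          (_ : wMeasure w {x | (y : ℝ≥0∞) < Q.indicator (fun x => (w x)⁻¹) x} ≠ 0),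
          (y : ℝ≥0∞) * wMeasure w {x | (y : ℝ≥0∞) < Q.indicator (fun x => (w x)⁻¹) x}
            ^ (1 - 1 / p)) / volume Q := by
        gcongr
        exact dualWkNorm_le_iSup hp _ w
    _ ≤ AprNorm p w := by
        simp only [ENNReal.mul_iSup, ENNReal.iSup_div, wMeasure_apply]
        exact iSup₂_le fun y hy => mul_wInt_rpow_div_le_aprNorm (by linarith) hw hQ y hy

theorem volume_eq_setLIntegral_indicator_inv (hw : IsWeight w) (hE : MeasurableSet E)
    (hEQ : E ⊆ Q) : volume E = ∫⁻ x in E, Q.indicator (fun x => (w x)⁻¹) x ∂wMeasure w := by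
  rw [setLIntegral_congr_fun hE fun x hx => indicator_of_mem (hEQ hx) _, wMeasure,
    setLIntegral_withDensity_eq_setLIntegral_mul _ (g := fun x => (w x)⁻¹) hw.1 hw.1.inv hE,
    ← setLIntegral_one]
  refine setLIntegral_congr_fun hE fun x _ => ?_
  exact (ENNReal.mul_inv_cancel (hw.2.1 x).1.ne' (hw.2.1 x).2).symm

theorem volume_le_dualWkNorm_mul (hp : 1 ≤ p) (hw : IsWeight w) (hQ : IsCube Q)
    (hE : MeasurableSet E) (hEQ : E ⊆ Q) :
    volume E ≤ ENNReal.ofReal p * dualWkNorm p (Q.indicator fun x => (w x)⁻¹) w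
      * wInt w E ^ (1 / p) := by
  set g := Q.indicator fun x => (w x)⁻¹
  rw [volume_eq_setLIntegral_indicator_inv hw hE hEQ, ← wMeasure_apply]
  unfold dualWkNorm
  split_ifs with hp1
  · subst hp1
    simp only [ENNReal.ofReal_one, one_mul, div_one, ENNReal.rpow_one]
    exact (lintegral_mono_ae (ae_restrict_of_ae (ae_le_essSup g))).trans_eq
      (setLIntegral_const _ _)
  have hp1 : 1 < p := hp.lt_of_ne' hp1
  have hq : 1 < p / (p - 1) := by
    rw [lt_div_iff₀ (by linarith)]
    linarith
  have hg_fin : ∀ x, g x ≠ ∞ := fun x => by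
    by_cases hx : x ∈ Q
    · simpa [g, indicator_of_mem hx] using (hw.2.1 x).1.ne'
    · simp [g, indicator_of_notMem hx]
  have hp0 : p - 1 ≠ 0 := by linarith
  have hconj : p / (p - 1) / (p / (p - 1) - 1) = p := by
    field_simp
    ring
  have hexp : 1 - 1 / (p / (p - 1)) = 1 / p := by
    field_simp
    ring
  have hE_fin : wMeasure w E ≠ ∞ := by
    rw [wMeasure_apply]
    exact wInt_ne_top_of_subset hw hQ hEQ
  have h := setLIntegral_le_wkNorm_mul_rpow (f := g)
    (hw.1.inv.indicator hQ.measurableSet).aemeasurable (ae_of_all _ hg_fin) hq hE_fin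
  rw [hconj, hexp] at h
  exact h

theorem aprNorm_le_ofReal_mul_aprConst (hp : 1 ≤ p) (hw : IsWeight w) :
    AprNorm p w ≤ ENNReal.ofReal p * AprConst p w := by
  refine iSup₂_le fun Q hQ => iSup₂_le fun E hE => iSup₂_le fun hEQ _ => ?_
  set D := dualWkNorm p (Q.indicator fun x => (w x)⁻¹) w
  calc volume E / volume Q * (wInt w Q / wInt w E) ^ (1 / p)
      = volume E / wInt w E ^ (1 / p) * (wInt w Q ^ (1 / p) / volume Q) := by
        rw [ENNReal.div_rpow_of_nonneg _ _ (by positivity)]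
        simp only [div_eq_mul_inv]
        ring
    _ ≤ ENNReal.ofReal p * D * (wInt w Q ^ (1 / p) / volume Q) := by
        gcongr
        exact ENNReal.div_le_of_le_mul (volume_le_dualWkNorm_mul hp hw hQ hE hEQ)
    _ = ENNReal.ofReal p * (wInt w Q ^ (1 / p) * D / volume Q) := by
        simp only [div_eq_mul_inv]
        ring
    _ ≤ ENNReal.ofReal p * AprConst p w := by
        gcongr
        exact le_aprConst hQ

end Weight

/-- `[w]_{A_p^R} ≤ ‖w‖_{A_p^R} ≤ p [w]_{A_p^R}` for `p ≥ 1`. -/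
theorem stmt8 {n : ℕ} (p : ℝ) (hp : 1 ≤ p) (w : Rn n → ℝ≥0∞) (hw : IsWeight w) :
    AprConst p w ≤ AprNorm p w ∧ AprNorm p w ≤ ENNReal.ofReal p * AprConst p w :=
  ⟨aprConst_le_aprNorm hp hw, aprNorm_le_ofReal_mul_aprConst hp hw⟩
end
end

section
/- There exist a measurable function $h$ on $\mathbb{R}^n$ and weights $u, v$ such that the inequality $\|h/v\|_{L^{p,\infty}(uv^p)} \leq C\|h\|_{L^{p,\infty}(u)}$ fails for every constant $C$: namely, taking $h(x) = |x|^{-n/p}\chi_{\{|x| \geq 1\}}$, $u = 1$, and $v = h + \chi_{\{|x| < 1\}}$, one has $\|h\|_{L^{p,\infty}(u)} < \infty$ but $\|h/v\|_{L^{p,\infty}(uv^p)} = \infty$, for any $0 < p < \infty$. -/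
/-!
For `y > 0` the level set `{‖x‖^(-n/p) > y}` lies in the ball of radius `y^(-p/n)`, whose volume
is `y^(-p)` times that of the unit ball, so `h` is in weak `L^p`. On `{‖x‖ ≥ 1}`, however,
`h / v = 1` while `v^p = ‖x‖^(-n)`, and in polar coordinates `∫_{‖x‖ ≥ 1} ‖x‖^(-n) dx` becomes a
multiple of `∫_1^∞ dt / t = ∞`; hence `{h / v > 1/2}` has infinite `v^p`-measure.
-/

open MeasureTheory Set ENNReal NNReal

noncomputable section

variable {n : ℕ}

theorem ENNReal.ofReal_rpow_neg_div_rpow {t : ℝ} (ht : 0 ≤ t) (a : ℝ) {p : ℝ} (hp : 0 < p) :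
    ENNReal.ofReal (t ^ (-(a / p))) ^ p = ENNReal.ofReal (t ^ (-a)) := by
  rw [ofReal_rpow_of_nonneg (Real.rpow_nonneg ht _) hp.le, ← Real.rpow_mul ht]
  field_simp

section WeakLp

variable {α : Type*} [MeasurableSpace α] {μ : Measure α} {f g : α → ℝ≥0∞} {p : ℝ}

theorem wkNorm_mono (hfg : f ≤ g) (hp : 0 ≤ p) : wkNorm f p μ ≤ wkNorm g p μ :=
  iSup_mono fun _ => by
    gcongr
    exact hfg _

theorem wkNorm_eq_top_of_measure_eq_top (hp : 0 < p) {y : ℝ≥0} (hy : y ≠ 0)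
    (h : μ {x | (y : ℝ≥0∞) < f x} = ∞) : wkNorm f p μ = ∞ :=
  eq_top_iff.2 <| calc
    ∞ = (y : ℝ≥0∞) * μ {x | (y : ℝ≥0∞) < f x} ^ (1 / p) := by
      rw [h, top_rpow_of_pos (by positivity), mul_top (by exact_mod_cast hy)]
    _ ≤ wkNorm f p μ :=
      le_iSup (fun y : ℝ≥0 => (y : ℝ≥0∞) * μ {x | (y : ℝ≥0∞) < f x} ^ (1 / p)) y

end WeakLp

section NormPower

open Module Metric

theorem setOf_lt_ofReal_norm_rpow_neg_subset_ball {E : Type*} [SeminormedAddCommGroup E]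
    {s : ℝ} (hs : 0 < s) {y : ℝ≥0} (hy : y ≠ 0) :
    {x : E | (y : ℝ≥0∞) < ENNReal.ofReal (‖x‖ ^ (-s))} ⊆ ball 0 ((y : ℝ) ^ (-s)⁻¹) := by
  intro x hx
  replace hx : (y : ℝ) < ‖x‖ ^ (-s) := coe_lt_ofReal.1 hx
  have hx0 : 0 < ‖x‖ := by
    refine (norm_nonneg x).lt_of_ne' fun h0 => ?_
    rw [h0, Real.zero_rpow (by linarith)] at hx
    exact hx.not_ge y.2
  rwa [mem_ball_zero_iff,
    Real.lt_rpow_inv_iff_of_neg hx0 (NNReal.coe_pos.2 (pos_iff_ne_zero.2 hy)) (by linarith)]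

variable {E : Type*} [NormedAddCommGroup E] [NormedSpace ℝ E] [FiniteDimensional ℝ E]
  [Nontrivial E] [MeasurableSpace E] [BorelSpace E] (μ : Measure E) [μ.IsAddHaarMeasure]

theorem wkNorm_ofReal_norm_rpow_neg_le {p : ℝ} (hp : 0 < p) :
    wkNorm (fun x : E => ENNReal.ofReal (‖x‖ ^ (-(finrank ℝ E / p)))) p μ ≤
      μ (ball 0 1) ^ (1 / p) := by
  have hd : (0 : ℝ) < finrank ℝ E := Nat.cast_pos.2 finrank_pos
  refine iSup_le fun y => ?_
  rcases eq_or_ne y 0 with rfl | hy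
  · simp
  have hy' : (0 : ℝ) < y := NNReal.coe_pos.2 (pos_iff_ne_zero.2 hy)
  have hr : ((y : ℝ) ^ (-(finrank ℝ E / p))⁻¹) ^ finrank ℝ E = (y : ℝ) ^ (-p) := by
    rw [← Real.rpow_natCast, ← Real.rpow_mul hy'.le]
    congr 1
    field_simp
  calc (y : ℝ≥0∞) * μ {x | (y : ℝ≥0∞) < ENNReal.ofReal (‖x‖ ^ (-(finrank ℝ E / p)))} ^ (1 / p)
      ≤ y * (y ^ (-p) * μ (ball 0 1)) ^ (1 / p) := by
        gcongr
        refine (measure_mono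
          (setOf_lt_ofReal_norm_rpow_neg_subset_ball (by positivity) hy)).trans_eq ?_
        rw [Measure.addHaar_ball _ _ (by positivity), hr, ← ofReal_rpow_of_pos hy',
          ofReal_coe_nnreal]
    _ = μ (ball 0 1) ^ (1 / p) := by
        rw [mul_rpow_of_nonneg _ _ (by positivity), ← ENNReal.rpow_mul, ← mul_assoc,
          show -p * (1 / p) = -1 by field_simp, ENNReal.rpow_neg_one,
          ENNReal.mul_inv_cancel (by exact_mod_cast hy) coe_ne_top, one_mul]

theorem not_integrableOn_norm_rpow_neg_finrank :
    ¬ IntegrableOn (fun x : E => ‖x‖ ^ (-(finrank ℝ E : ℝ))) {x | 1 ≤ ‖x‖} μ := by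
  intro h
  rw [← integrable_indicator_iff (measurableSet_le measurable_const measurable_norm)] at h
  have hpolar := (integrable_fun_norm_addHaar μ
    (f := (Ici (1 : ℝ)).indicator fun t => t ^ (-(finrank ℝ E : ℝ)))).1 h
  have hinv : IntegrableOn (fun t : ℝ => t ^ (-1 : ℝ)) (Ioi 1) := by
    refine (hpolar.mono_set (Ioi_subset_Ioi zero_le_one)).congr_fun (fun t (ht : 1 < t) => ?_)
      measurableSet_Ioi
    have ht0 : 0 < t := one_pos.trans ht
    beta_reduce
    rw [indicator_of_mem (mem_Ici.2 ht.le), smul_eq_mul, ← Real.rpow_natCast,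
      ← Real.rpow_add ht0, Nat.cast_sub finrank_pos]
    ring_nf
  exact lt_irrefl _ ((integrableOn_Ioi_rpow_iff one_pos).1 hinv)

theorem lintegral_norm_rpow_neg_finrank_eq_top :
    ∫⁻ x in {x : E | 1 ≤ ‖x‖}, ENNReal.ofReal (‖x‖ ^ (-(finrank ℝ E : ℝ))) ∂μ = ∞ := by
  by_contra h
  exact not_integrableOn_norm_rpow_neg_finrank μ <|
    (lintegral_ofReal_ne_top_iff_integrable (measurable_norm.pow_const _).aestronglyMeasurable
      (.of_forall fun x => Real.rpow_nonneg (norm_nonneg x) _)).1 h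

end NormPower

/-- Counterexample: with `h(x) = |x|^{-n/p} χ_{\{|x| ≥ 1\}}`, `u = 1`,
`v = h + χ_{\{|x| < 1\}}`, one has `‖h‖_{L^{p,∞}(u)} < ∞` but
`‖h/v‖_{L^{p,∞}(uv^p)} = ∞`. -/
theorem stmt18 (n : ℕ) (hn : 1 ≤ n) (p : ℝ) (hp : 0 < p) :
    wkNormW (fun x : Rn n =>
        if 1 ≤ ‖x‖ then ENNReal.ofReal (‖x‖ ^ (-((n : ℝ) / p))) else 0) p
      (fun _ => 1) < ∞ ∧
    wkNormW (fun x : Rn n =>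
        (if 1 ≤ ‖x‖ then ENNReal.ofReal (‖x‖ ^ (-((n : ℝ) / p))) else 0) /
          (if 1 ≤ ‖x‖ then ENNReal.ofReal (‖x‖ ^ (-((n : ℝ) / p))) else 1)) p
      (fun x => 1 *
        (if 1 ≤ ‖x‖ then ENNReal.ofReal (‖x‖ ^ (-((n : ℝ) / p))) else 1) ^ p) = ∞ := by
  have hdim : Module.finrank ℝ (Rn n) = n := finrank_euclideanSpace_fin
  have : Nontrivial (Rn n) := Module.nontrivial_of_finrank_pos (R := ℝ) (by omega)
  have hS : MeasurableSet {x : Rn n | 1 ≤ ‖x‖} := measurableSet_le measurable_const measurable_norm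
  constructor
  · calc _ ≤ wkNorm (fun x : Rn n => ENNReal.ofReal (‖x‖ ^ (-(Module.finrank ℝ (Rn n) / p)))) p
            volume := by
          rw [wkNormW, wMeasure, ← Pi.one_def, withDensity_one, hdim]
          exact wkNorm_mono (fun x => by split_ifs <;> simp) hp.le
      _ ≤ volume (Metric.ball (0 : Rn n) 1) ^ (1 / p) := wkNorm_ofReal_norm_rpow_neg_le volume hp
      _ < ∞ := rpow_lt_top_of_nonneg (by positivity) measure_ball_lt_top.ne
  · refine wkNorm_eq_top_of_measure_eq_top hp (y := 1 / 2) (by norm_num) (eq_top_mono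
      (measure_mono (s := {x | 1 ≤ ‖x‖}) fun x (hx : 1 ≤ ‖x‖) => ?_) ?_)
    · have hpos : ENNReal.ofReal (‖x‖ ^ (-((n : ℝ) / p))) ≠ 0 :=
        (ofReal_pos.2 (Real.rpow_pos_of_pos (one_pos.trans_le hx) _)).ne'
      simp only [mem_ofPred_eq, if_pos hx, ENNReal.div_self hpos ofReal_ne_top]
      norm_num
    · rw [wMeasure, withDensity_apply _ hS,
        ← lintegral_norm_rpow_neg_finrank_eq_top (volume : Measure (Rn n)), hdim]
      refine setLIntegral_congr_fun hS fun x (hx : 1 ≤ ‖x‖) => ?_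
      rw [if_pos hx, one_mul, ENNReal.ofReal_rpow_neg_div_rpow (norm_nonneg x) _ hp]
end
end
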